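/- arXiv:2008.11987 — 4 statements merged into one kernel-verified Lean document; each statement's English description precedes it below -/
import Mathlib

section
/- Let $L>0$, $v_{max}>0$, and suppose $x_i, x_{i+1} \in \mathbb{R}$ satisfy $x_{i+1} - x_i - L \geq 0$. Define the Euler updates $x_i' = x_i + \Delta t\, c_i (1 - L/(x_{i+1}-x_i))$ and $x_{i+1}' = x_{i+1} + \Delta t\, c_{i+1}(1 - L/(x_{i+2}-x_{i+1}))$ where $0 \leq c_i, c_{i+1} \leq v_{max}$ and $x_{i+2} - x_{i+1} \geq L > 0$. If $\Delta t \leq L/v_{max}$, then $x_{i+1}' - x_i' - L \geq 0$. -/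
/-! A vehicle moves by `Δt c (1 - L/d)` in one Euler step, where `d` is its headway. The CFL
condition gives `Δt c ≤ L`, so this is at most `L (1 - L/d) = d - L - (d - L)²/d ≤ d - L`: the
follower never closes more than the spare gap `d - L`, while the leader only moves forward. -/

noncomputable def ftlStep (Δt c L d : ℝ) : ℝ := Δt * c * (1 - L / d)

lemma mul_one_sub_div_le_sub {L d : ℝ} (hd : 0 < d) : L * (1 - L / d) ≤ d - L := by
  have key : d - L - L * (1 - L / d) = (d - L) ^ 2 / d := by
    field_simp
  have : 0 ≤ (d - L) ^ 2 / d := by positivity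
  linarith

lemma ftlStep_nonneg {Δt c L d : ℝ} (hΔt : 0 ≤ Δt) (hc : 0 ≤ c) (hL : 0 ≤ L) (hLd : L ≤ d) :
    0 ≤ ftlStep Δt c L d :=
  mul_nonneg (mul_nonneg hΔt hc) (sub_nonneg.2 (div_le_one_of_le₀ hLd (hL.trans hLd)))

lemma ftlStep_le_sub {Δt c L d : ℝ} (hcfl : Δt * c ≤ L) (hd : 0 < d) (hLd : L ≤ d) :
    ftlStep Δt c L d ≤ d - L :=
  calc Δt * c * (1 - L / d) ≤ L * (1 - L / d) :=
        mul_le_mul_of_nonneg_right hcfl (sub_nonneg.2 ((div_le_one hd).2 hLd))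
    _ ≤ d - L := mul_one_sub_div_le_sub hd

lemma mul_le_of_le_div_of_le {Δt c L v : ℝ} (hv : 0 < v) (hΔt0 : 0 ≤ Δt) (hΔt : Δt ≤ L / v)
    (hc : c ≤ v) : Δt * c ≤ L :=
  calc Δt * c ≤ Δt * v := mul_le_mul_of_nonneg_left hc hΔt0
    _ ≤ L := (le_div_iff₀ hv).1 hΔt

theorem stmt_0_general (L vmax Δt : ℝ) (ci ci1 xi xi1 xi2 : ℝ)
    (hL : 0 < L) (hv : 0 < vmax)
    (hgap : 0 ≤ xi1 - xi - L)
    (hgap2 : L ≤ xi2 - xi1)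
    (hci' : ci ≤ vmax)
    (hci1 : 0 ≤ ci1)
    (hΔt0 : 0 ≤ Δt) (hΔt : Δt ≤ L / vmax) :
    (xi1 + Δt * ci1 * (1 - L / (xi2 - xi1)))
      - (xi + Δt * ci * (1 - L / (xi1 - xi))) - L ≥ 0 := by
  have follower : ftlStep Δt ci L (xi1 - xi) ≤ xi1 - xi - L :=
    ftlStep_le_sub (mul_le_of_le_div_of_le hv hΔt0 hΔt hci') (by linarith) (by linarith)
  have leader : 0 ≤ ftlStep Δt ci1 L (xi2 - xi1) := ftlStep_nonneg hΔt0 hci1 hL.le hgap2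
  unfold ftlStep at follower leader
  linarith

/-- CFL-type collision avoidance for one Euler step of the Follow-the-Leader model. -/
theorem stmt_0 (L vmax Δt : ℝ) (ci ci1 xi xi1 xi2 : ℝ)
    (hL : 0 < L) (hv : 0 < vmax)
    (hgap : 0 ≤ xi1 - xi - L)
    (hgap2 : L ≤ xi2 - xi1)
    (hci : 0 ≤ ci) (hci' : ci ≤ vmax)
    (hci1 : 0 ≤ ci1) (hci1' : ci1 ≤ vmax)
    (hΔt0 : 0 ≤ Δt) (hΔt : Δt ≤ L / vmax) :
    (xi1 + Δt * ci1 * (1 - L / (xi2 - xi1)))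
      - (xi + Δt * ci * (1 - L / (xi1 - xi))) - L ≥ 0 :=
  stmt_0_general L vmax Δt ci ci1 xi xi1 xi2 hL hv hgap hgap2 hci' hci1 hΔt0 hΔt
end

section
/- Let $x_{i+1}(t_j) - x_i(t_j) - L \geq 0$ and $x_{i+2}(t_j) - x_{i+1}(t_j) \geq L$. With the Euler update using bounded capacities $c(x) \in [0, v_{max}]$, the difference after one step satisfies $x_{i+1}(t_{j+1}) - x_i(t_{j+1}) - L \geq (x_{i+1}(t_j) - x_i(t_j) - L)(1 - \Delta t\, v_{max}/L)$. -/
/-!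
The leader's Euler step is forward, since its headway is at least `L`, while the follower's
speed `c (1 - L / h) = c (h - L) / h` is at most `vmax (h - L) / L` for a headway `h ≥ L`.
Hence one step shrinks the gap `h - L` by at most `Δt vmax (h - L) / L`.
-/

lemma one_sub_div_nonneg_of_le {L h : ℝ} (hL : 0 ≤ L) (hLh : L ≤ h) : 0 ≤ 1 - L / h :=
  sub_nonneg.mpr (div_le_one_of_le₀ hLh (hL.trans hLh))

lemma one_sub_div_le_sub_div {L h : ℝ} (hL : 0 < L) (hLh : L ≤ h) :
    1 - L / h ≤ (h - L) / L := by
  have hh : 0 < h := hL.trans_le hLh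
  calc 1 - L / h = (h - L) / h := by field_simp
    _ ≤ (h - L) / L := div_le_div_of_nonneg_left (sub_nonneg.mpr hLh) hL hLh

lemma mul_one_sub_div_le {L h c vmax : ℝ} (hL : 0 < L) (hLh : L ≤ h) (hc₀ : 0 ≤ c)
    (hc : c ≤ vmax) : c * (1 - L / h) ≤ vmax * ((h - L) / L) :=
  mul_le_mul hc (one_sub_div_le_sub_div hL hLh) (one_sub_div_nonneg_of_le hL.le hLh)
    (hc₀.trans hc)

theorem stmt_1_general (L vmax Δt : ℝ) (c : ℝ → ℝ) (xi xi1 xi2 : ℝ)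
    (hL : 0 < L)
    (hgap : 0 ≤ xi1 - xi - L)
    (hgap2 : L ≤ xi2 - xi1)
    (hc : ∀ x, 0 ≤ c x ∧ c x ≤ vmax)
    (hΔt0 : 0 ≤ Δt) :
    (xi1 + Δt * c xi1 * (1 - L / (xi2 - xi1)))
      - (xi + Δt * c xi * (1 - L / (xi1 - xi))) - L
      ≥ (xi1 - xi - L) * (1 - Δt * vmax / L) := by
  have hleader : 0 ≤ Δt * c xi1 * (1 - L / (xi2 - xi1)) :=
    mul_nonneg (mul_nonneg hΔt0 (hc xi1).1) (one_sub_div_nonneg_of_le hL.le hgap2)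
  have hfollower : Δt * c xi * (1 - L / (xi1 - xi)) ≤ Δt * (vmax * ((xi1 - xi - L) / L)) := by
    rw [mul_assoc]
    exact mul_le_mul_of_nonneg_left
      (mul_one_sub_div_le hL (by linarith) (hc xi).1 (hc xi).2) hΔt0
  have hrhs : (xi1 - xi - L) * (1 - Δt * vmax / L)
      = (xi1 - xi - L) - Δt * (vmax * ((xi1 - xi - L) / L)) := by
    ring
  linarith

/-- One-step Euler gap estimate: the new headway minus vehicle length is bounded
below by the old one times `(1 - Δt vmax / L)`. -/
theorem stmt_1 (L vmax Δt : ℝ) (c : ℝ → ℝ) (xi xi1 xi2 : ℝ)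
    (hL : 0 < L) (hv : 0 < vmax)
    (hgap : 0 ≤ xi1 - xi - L)
    (hgap2 : L ≤ xi2 - xi1)
    (hc : ∀ x, 0 ≤ c x ∧ c x ≤ vmax)
    (hΔt0 : 0 ≤ Δt) :
    (xi1 + Δt * c xi1 * (1 - L / (xi2 - xi1)))
      - (xi + Δt * c xi * (1 - L / (xi1 - xi))) - L
      ≥ (xi1 - xi - L) * (1 - Δt * vmax / L) :=
  stmt_1_general L vmax Δt c xi xi1 xi2 hL hgap hgap2 hc hΔt0
end

section
/- Let $f(y,w) = c(y)v(w)$ with $v(w) = 1 - 1/w$, where $c: \mathbb{R} \to \mathbb{R}$ is Lipschitz continuous with constant $L_c$ and uniformly bounded. Suppose the initial values satisfy $\|w^{(N)}(0)\|_\infty \leq K < \infty$ and $w_i^{(N)}(0) \geq 1$ for all $i$. Under the CFL condition $\lambda |f_w| \leq 1$ with $\lambda = \Delta t/\Delta y$, one step of the Lax-Friedrichs scheme $w_i(t_{j+1}) = \frac{1}{2}(w_{i-1}(t_j) + w_{i+1}(t_j)) + \frac{\lambda}{2}(f(y_{i+1/2}, w_{i+1}(t_j)) - f(y_{i-3/2},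 w_{i-1}(t_j)))$ satisfies $\|w^{(N)}(t_{j+1})\|_\infty \leq \|w^{(N)}(t_j)\|_\infty + \Delta t\, L_c$. -/
lemma abs_one_sub_one_div_le_one {w : ℝ} (hw : 1 ≤ w) : |1 - 1 / w| ≤ 1 := by
  have h_pos : 0 < 1 / w := by positivity
  have h_le : 1 / w ≤ 1 := (div_le_one (by linarith)).mpr hw
  rw [abs_le]
  constructor <;> linarith

lemma abs_midpoint_add_le {a b x K : ℝ} (ha : |a| ≤ K) (hb : |b| ≤ K)
    (hx : |x| ≤ |a - b| / 2) : |(a + b) / 2 + x| ≤ K := by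
  rw [abs_le] at ha hb hx ⊢
  rcases abs_cases (a - b) with ⟨h, _⟩ | ⟨h, _⟩ <;> constructor <;> linarith

/-- The scheme splits into a monotone update with the flux frozen at `y₁`, which stays in
`[-K, K]` under the CFL condition, plus the variation of the flux in `y`. -/
lemma abs_laxFriedrichs_step_le {f : ℝ → ℝ → ℝ} {lam y₀ y₁ a b K M : ℝ} (hlam : 0 ≤ lam)
    (ha : |a| ≤ K) (hb : |b| ≤ K) (hcfl : lam * |f y₁ a - f y₁ b| ≤ |a - b|)
    (hvar : lam * |f y₁ b - f y₀ b| ≤ M) :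
    |(b + a) / 2 + lam / 2 * (f y₁ a - f y₀ b)| ≤ K + M / 2 := by
  have h_split : (b + a) / 2 + lam / 2 * (f y₁ a - f y₀ b)
      = ((b + a) / 2 + lam / 2 * (f y₁ a - f y₁ b)) + lam / 2 * (f y₁ b - f y₀ b) := by ring
  have h_frozen : |(b + a) / 2 + lam / 2 * (f y₁ a - f y₁ b)| ≤ K := by
    refine abs_midpoint_add_le hb ha ?_
    rw [abs_mul, abs_of_nonneg (by positivity), abs_sub_comm b a]
    linarith
  have h_var : |lam / 2 * (f y₁ b - f y₀ b)| ≤ M / 2 := by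
    rw [abs_mul, abs_of_nonneg (by positivity)]
    linarith
  rw [h_split]
  exact (abs_add_le _ _).trans (add_le_add h_frozen h_var)

theorem stmt_6_general (c : ℝ → ℝ) (Lc : NNReal) (hc : LipschitzWith Lc c)
    (Δt Δy : ℝ) (hΔt : 0 < Δt) (hΔy : 0 < Δy)
    (Y : ℤ → ℝ) (hY : ∀ i, Y (i + 1) = Y i + Δy)
    (w w' : ℤ → ℝ) (K : ℝ)
    (hw1 : ∀ i, 1 ≤ w i) (hwK : ∀ i, |w i| ≤ K)
    -- CFL condition `λ |f_w| ≤ 1` expressed as a Lipschitz bound on the flux in `w`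
    (hCFL : ∀ y a b : ℝ, 1 ≤ a → 1 ≤ b →
      |c y * (1 - 1 / a) - c y * (1 - 1 / b)| ≤ (Δy / Δt) * |a - b|)
    (hscheme : ∀ i : ℤ, w' i = (w (i - 1) + w (i + 1)) / 2
      + (Δt / Δy) / 2 * (c (Y i) * (1 - 1 / w (i + 1))
        - c (Y (i - 2)) * (1 - 1 / w (i - 1)))) :
    ∀ i, |w' i| ≤ K + Δt * Lc := by
  intro i
  have h_lam : 0 ≤ Δt / Δy := by positivity
  have h_gap : Y i - Y (i - 2) = 2 * Δy := by
    have h₁ := hY (i - 2)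
    have h₂ := hY (i - 1)
    simp only [sub_add_cancel, show i - 2 + 1 = i - 1 by ring] at h₁ h₂
    linarith
  have h_cfl : Δt / Δy * |c (Y i) * (1 - 1 / w (i + 1)) - c (Y i) * (1 - 1 / w (i - 1))|
      ≤ |w (i + 1) - w (i - 1)| :=
    calc _ ≤ Δt / Δy * (Δy / Δt * |w (i + 1) - w (i - 1)|) :=
          mul_le_mul_of_nonneg_left (hCFL _ _ _ (hw1 _) (hw1 _)) h_lam
      _ = _ := by field_simp
  have h_var : Δt / Δy * |c (Y i) * (1 - 1 / w (i - 1)) - c (Y (i - 2)) * (1 - 1 / w (i - 1))|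
      ≤ 2 * (Δt * Lc) :=
    calc _ = Δt / Δy * (|c (Y i) - c (Y (i - 2))| * |1 - 1 / w (i - 1)|) := by
          rw [← sub_mul, abs_mul]
      _ ≤ Δt / Δy * (Lc * |Y i - Y (i - 2)| * 1) := by
          gcongr
          · exact hc.dist_le_mul _ _
          · exact abs_one_sub_one_div_le_one (hw1 _)
      _ = 2 * (Δt * Lc) := by
          rw [h_gap, abs_of_pos (by positivity)]
          field_simp
  rw [hscheme i]
  linarith [abs_laxFriedrichs_step_le (f := fun y v => c y * (1 - 1 / v)) h_lam
    (hwK (i + 1)) (hwK (i - 1)) h_cfl h_var]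

/-- One-step sup-norm growth bound for the Lax-Friedrichs scheme for the
Lagrangian inverse densities: `‖w(t_{j+1})‖_∞ ≤ ‖w(t_j)‖_∞ + Δt L_c`. -/
theorem stmt_6 (c : ℝ → ℝ) (Lc : NNReal) (hc : LipschitzWith Lc c)
    (hcbd : ∃ M, ∀ y, |c y| ≤ M)
    (Δt Δy : ℝ) (hΔt : 0 < Δt) (hΔy : 0 < Δy)
    (Y : ℤ → ℝ) (hY : ∀ i, Y (i + 1) = Y i + Δy)
    (w w' : ℤ → ℝ) (K : ℝ)
    (hw1 : ∀ i, 1 ≤ w i) (hwK : ∀ i, |w i| ≤ K)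
    -- CFL condition `λ |f_w| ≤ 1` expressed as a Lipschitz bound on the flux in `w`
    (hCFL : ∀ y a b : ℝ, 1 ≤ a → 1 ≤ b →
      |c y * (1 - 1 / a) - c y * (1 - 1 / b)| ≤ (Δy / Δt) * |a - b|)
    (hscheme : ∀ i : ℤ, w' i = (w (i - 1) + w (i + 1)) / 2
      + (Δt / Δy) / 2 * (c (Y i) * (1 - 1 / w (i + 1))
        - c (Y (i - 2)) * (1 - 1 / w (i - 1)))) :
    ∀ i, |w' i| ≤ K + Δt * Lc :=
  stmt_6_general c Lc hc Δt Δy hΔt hΔy Y hY w w' K hw1 hwK hCFL hscheme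
end

section
/- Let $c: \mathbb{R} \to (0,\infty)$ be Lipschitz with constant $L_c > 0$, $v(w) = 1 - 1/w$ (Lipschitz with constant $L_v$ on $[1,\infty)$, bounded by 1 there), and $f(y,w) = c(y)v(w)$. Assume $w_{i}^{(N)}(t_0) \geq 1 + \varepsilon$ for all $i$ with $\varepsilon > 0$, and the CFL condition $\frac{\Delta t}{\Delta y} L_{f_w} < 1$ holds, where $L_{f_w}$ is the Lipschitz constant of $f$ in $w$ on $[1,\infty)$. If $\Delta t \leq (\varepsilon - \tilde\varepsilon)/L_c$ for some $0 < \tilde\varepsilon < \varepsilon$, then one Lax-Friedrichs step yields $w_i^{(N)}(t_1) \geq 1 + \tilde\varepsilon$ for all $i$. -/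
/-!
Split the numerical flux difference as
`c(y_{i+1}) (v(w_{i+1}) - v(w_{i-1})) + (c(y_{i+1}) - c(y_{i-1})) v(w_{i-1})`.
Under the CFL condition the first part costs at most `|w_{i+1} - w_{i-1}| / 2`, which the
average `(w_{i-1} + w_{i+1}) / 2` absorbs down to `min w_{i-1} w_{i+1} ≥ 1 + ε`. The second part
is bounded by `L_c · 2Δy` since `|v| ≤ 1` on `[1, ∞)`, and after multiplying by `λ/2` it costs
at most `L_c Δt ≤ ε - ε̃`.
-/

/-- `Fb'` stands for the flux at the right node evaluated at the left state, so `L` bounds the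
dependence of the flux on the state and `D` its dependence on the position. -/
theorem laxFriedrichs_update_ge {a b m lam L D Fa Fb Fb' : ℝ} (ha : m ≤ a) (hb : m ≤ b)
    (hlam : 0 ≤ lam) (hCFL : lam * L ≤ 1)
    (hstate : |Fb - Fb'| ≤ L * |b - a|) (hspace : |Fb' - Fa| ≤ D) :
    m - lam / 2 * D ≤ (a + b) / 2 + lam / 2 * (Fb - Fa) := by
  have hmin : m ≤ (a + b) / 2 - |b - a| / 2 := by
    rcases abs_cases (b - a) with ⟨h, _⟩ | ⟨h, _⟩ <;> rw [h] <;> linarith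
  have hstate' : -|b - a| ≤ lam * (Fb - Fb') := by
    have h1 := mul_le_mul_of_nonneg_left (neg_le_of_abs_le hstate) hlam
    have h2 := mul_le_mul_of_nonneg_right hCFL (abs_nonneg (b - a))
    linarith
  have hspace' : -(lam * D) ≤ lam * (Fb' - Fa) := by
    simpa using mul_le_mul_of_nonneg_left (neg_le_of_abs_le hspace) hlam
  linarith

theorem stmt_8_general (c : ℝ → ℝ) (Lc : NNReal) (hLc : (0:ℝ) < Lc)
    (hc : LipschitzWith Lc c)
    (hvbd : ∀ a : ℝ, 1 ≤ a → |1 - 1 / a| ≤ 1)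
    (Δt Δy : ℝ) (hΔt : 0 < Δt) (hΔy : 0 < Δy)
    (Y : ℤ → ℝ) (hY : ∀ i, Y (i + 1) = Y i + Δy)
    (Lfw : ℝ)
    (hLfw : ∀ y a b : ℝ, 1 ≤ a → 1 ≤ b →
      |c y * (1 - 1 / a) - c y * (1 - 1 / b)| ≤ Lfw * |a - b|)
    (hCFL : Δt / Δy * Lfw < 1)
    (ε εt : ℝ) (hεt : 0 < εt) (hεεt : εt < ε)
    (hΔtε : Δt ≤ (ε - εt) / Lc)
    (w w' : ℤ → ℝ) (hw : ∀ i, 1 + ε ≤ w i)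
    (hscheme : ∀ i : ℤ, w' i = (w (i - 1) + w (i + 1)) / 2
      + (Δt / Δy) / 2 * (c (Y (i + 1)) * (1 - 1 / w (i + 1))
        - c (Y (i - 1)) * (1 - 1 / w (i - 1)))) :
    ∀ i, 1 + εt ≤ w' i := by
  intro i
  have ha := hw (i - 1)
  have hb := hw (i + 1)
  have hgrid : Y (i + 1) - Y (i - 1) = 2 * Δy := by
    have := hY (i - 1)
    rw [sub_add_cancel] at this
    linarith [hY i]
  have hspace : |c (Y (i + 1)) * (1 - 1 / w (i - 1)) - c (Y (i - 1)) * (1 - 1 / w (i - 1))|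
      ≤ Lc * (2 * Δy) := by
    rw [← sub_mul, abs_mul]
    have hLip := hc.dist_le_mul (Y (i + 1)) (Y (i - 1))
    rw [Real.dist_eq, Real.dist_eq, hgrid, abs_of_pos (by positivity : 0 < 2 * Δy)] at hLip
    simpa using mul_le_mul hLip (hvbd (w (i - 1)) (by linarith)) (abs_nonneg _) (by positivity)
  have hstep := laxFriedrichs_update_ge ha hb (div_pos hΔt hΔy).le hCFL.le
    (hLfw (Y (i + 1)) _ _ (by linarith) (by linarith)) hspace
  have hcost : Δt / Δy / 2 * (Lc * (2 * Δy)) = Δt * Lc := by field_simp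
  have hΔtLc : Δt * Lc ≤ ε - εt := (le_div_iff₀ hLc).mp hΔtε
  rw [hscheme i]
  linarith

/-- Lower bound after one Lax-Friedrichs step: the safety distance `1 + ε`
degrades to at most `1 + ε̃` if `Δt ≤ (ε - ε̃)/L_c`. -/
theorem stmt_8 (c : ℝ → ℝ) (Lc Lv : NNReal) (hLc : (0:ℝ) < Lc)
    (hc : LipschitzWith Lc c) (hcpos : ∀ y, 0 < c y) (hcbd : ∃ M, ∀ y, |c y| ≤ M)
    (hvLip : ∀ a b : ℝ, 1 ≤ a → 1 ≤ b → |(1 - 1 / a) - (1 - 1 / b)| ≤ Lv * |a - b|)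
    (hvbd : ∀ a : ℝ, 1 ≤ a → |1 - 1 / a| ≤ 1)
    (Δt Δy : ℝ) (hΔt : 0 < Δt) (hΔy : 0 < Δy)
    (Y : ℤ → ℝ) (hY : ∀ i, Y (i + 1) = Y i + Δy)
    (Lfw : ℝ)
    (hLfw : ∀ y a b : ℝ, 1 ≤ a → 1 ≤ b →
      |c y * (1 - 1 / a) - c y * (1 - 1 / b)| ≤ Lfw * |a - b|)
    (hCFL : Δt / Δy * Lfw < 1)
    (ε εt : ℝ) (hεt : 0 < εt) (hεεt : εt < ε)
    (hΔtε : Δt ≤ (ε - εt) / Lc)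
    (w w' : ℤ → ℝ) (hw : ∀ i, 1 + ε ≤ w i)
    (hscheme : ∀ i : ℤ, w' i = (w (i - 1) + w (i + 1)) / 2
      + (Δt / Δy) / 2 * (c (Y (i + 1)) * (1 - 1 / w (i + 1))
        - c (Y (i - 1)) * (1 - 1 / w (i - 1)))) :
    ∀ i, 1 + εt ≤ w' i :=
  stmt_8_general c Lc hLc hc hvbd Δt Δy hΔt hΔy Y hY Lfw hLfw hCFL ε εt hεt hεεt hΔtε w w' hw
    hscheme
end
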